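/- arXiv:gr-qc/0605096 — 3 statements merged into one kernel-verified Lean document; each statement's English description precedes it below -/
import Mathlib

section
/- Let d ≥ 1, U ⊆ ℝ^d open, u : U → ℝ^d and q, r : U → ℝ differentiable functions satisfying Σ_{α=1}^{d} ∂_α (q u^α) = 0 and Σ_{α=1}^{d} ∂_α (r u^α) = 0 on U. Then at every point x ∈ U with r(x) ≠ 0, the derivative of the ratio q/r in the direction u vanishes: Σ_{α=1}^{d} u^α(x) ∂_α (q/r)(x) = 0. -/
/-- if `u : U → ℝ^d`, `q, r : U → ℝ` are differentiable on the open
set `U ⊆ ℝ^d` and satisfy `∑_α ∂_α (q u^α) = 0` and `∑_α ∂_α (r u^α) = 0` on `U`,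
then at every `x ∈ U` with `r(x) ≠ 0` we have `∑_α u^α(x) ∂_α (q/r)(x) = 0`. -/
theorem charge_to_mass_ratio_constant_along_flow
    (d : ℕ) (hd : 1 ≤ d)
    (U : Set (Fin d → ℝ)) (hU : IsOpen U)
    (u : (Fin d → ℝ) → (Fin d → ℝ))
    (q r : (Fin d → ℝ) → ℝ)
    (hu : ∀ x ∈ U, DifferentiableAt ℝ u x)
    (hq : ∀ x ∈ U, DifferentiableAt ℝ q x)
    (hr : ∀ x ∈ U, DifferentiableAt ℝ r x)
    (hconsq : ∀ x ∈ U,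
      ∑ α : Fin d, fderiv ℝ (fun y => q y * u y α) x (Pi.single α 1) = 0)
    (hconsr : ∀ x ∈ U,
      ∑ α : Fin d, fderiv ℝ (fun y => r y * u y α) x (Pi.single α 1) = 0) :
    ∀ x ∈ U, r x ≠ 0 →
      ∑ α : Fin d, u x α * fderiv ℝ (fun y => q y / r y) x (Pi.single α 1) = 0 := by
  intro x hx hxr
  have hux := hu x hx
  have hqx := hq x hx
  have hrx := hr x hx
  have hui : ∀ α : Fin d, DifferentiableAt ℝ (fun y => u y α) x :=
    fun α => (differentiableAt_pi.mp hux) α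
  set g : (Fin d → ℝ) → ℝ := fun y => q y / r y with hg_def
  have hg : DifferentiableAt ℝ g x := by
    have h1 : DifferentiableAt ℝ (fun y => q y * (r y)⁻¹) x := hqx.mul (hrx.inv hxr)
    simpa [hg_def, div_eq_mul_inv] using h1
  have hrne : ∀ᶠ y in nhds x, r y ≠ 0 := hrx.continuousAt.eventually_ne hxr
  have heq : (fun y => g y * r y) =ᶠ[nhds x] q :=
    hrne.mono fun y hy => by simp [hg_def, div_mul_cancel₀ _ hy]
  have hfq : fderiv ℝ q x = g x • fderiv ℝ r x + r x • fderiv ℝ g x := by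
    rw [← heq.fderiv_eq, fderiv_fun_mul hg hrx]
  -- abbreviations
  set A : Fin d → ℝ := fun α => fderiv ℝ q x (Pi.single α 1) with hA_def
  set B : Fin d → ℝ := fun α => fderiv ℝ r x (Pi.single α 1) with hB_def
  set F : Fin d → ℝ := fun α => fderiv ℝ g x (Pi.single α 1) with hF_def
  set C : Fin d → ℝ := fun α => fderiv ℝ (fun y => u y α) x (Pi.single α 1) with hC_def
  have hA : ∀ α, A α = g x * B α + r x * F α := by
    intro α
    simp only [hA_def, hB_def, hF_def, hfq]
    simp
  -- expand the conservation laws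
  have hmulq : ∀ α : Fin d, fderiv ℝ (fun y => q y * u y α) x (Pi.single α 1)
      = q x * C α + u x α * A α := by
    intro α
    rw [fderiv_fun_mul hqx (hui α)]
    simp [hA_def, hC_def]
  have hmulr : ∀ α : Fin d, fderiv ℝ (fun y => r y * u y α) x (Pi.single α 1)
      = r x * C α + u x α * B α := by
    intro α
    rw [fderiv_fun_mul hrx (hui α)]
    simp [hB_def, hC_def]
  have h1 : q x * (∑ α, C α) + ∑ α, u x α * A α = 0 := by
    have h := hconsq x hx
    simp only [hmulq] at h
    rwa [Finset.sum_add_distrib, ← Finset.mul_sum] at h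
  have h2 : r x * (∑ α, C α) + ∑ α, u x α * B α = 0 := by
    have h := hconsr x hx
    simp only [hmulr] at h
    rwa [Finset.sum_add_distrib, ← Finset.mul_sum] at h
  have h3 : ∑ α, u x α * A α
      = g x * (∑ α, u x α * B α) + r x * (∑ α, u x α * F α) := by
    rw [Finset.mul_sum, Finset.mul_sum, ← Finset.sum_add_distrib]
    exact Finset.sum_congr rfl fun α _ => by rw [hA α]; ring
  have hgx : g x * r x = q x := by
    simp [hg_def, div_mul_cancel₀ _ hxr]
  -- conclude
  have hfinal : r x * (∑ α, u x α * F α) = 0 := by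
    linear_combination h1 - g x * h2 - h3 + (∑ α, C α) * hgx
  have hS : (∑ α, u x α * F α) = 0 :=
    by rcases mul_eq_zero.mp hfinal with h | h
       · exact absurd h hxr
       · exact h
  simpa [hF_def, hg_def] using hS
end

section
/- Let d ≥ 1, U ⊆ ℝ^d open, u : U → ℝ^d a C¹ vector field and r : U → ℝ a differentiable function satisfying the continuity equation Σ_{α=1}^{d} ( u^α ∂_α r + r ∂_α u^α ) = 0 on U. Let T > 0 and let γ : [0,T] → U be differentiable with γ'(t) = u(γ(t)) for all t ∈ [0,T]. If r(γ(0)) = 0, then r(γ(t)) = 0 for all t ∈ [0,T]. -/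
/-- if the C¹ vector field `u` and the differentiable density `r`
satisfy the continuity equation `∑_α (u^α ∂_α r + r ∂_α u^α) = 0` on the open
set `U ⊆ ℝ^d`, and `γ : [0,T] → U` is an integral curve of `u` with
`r(γ(0)) = 0`, then `r(γ(t)) = 0` for all `t ∈ [0,T]`. -/
theorem density_vanishes_along_integral_curve
    (d : ℕ) (hd : 1 ≤ d)
    (U : Set (Fin d → ℝ)) (hU : IsOpen U)
    (u : (Fin d → ℝ) → (Fin d → ℝ)) (r : (Fin d → ℝ) → ℝ)
    (hu : ContDiffOn ℝ 1 u U)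
    (hr : ∀ x ∈ U, DifferentiableAt ℝ r x)
    (hcont : ∀ x ∈ U,
      ∑ α : Fin d,
        (u x α * fderiv ℝ r x (Pi.single α 1)
          + r x * fderiv ℝ (fun y => u y α) x (Pi.single α 1)) = 0)
    (T : ℝ) (hT : 0 < T)
    (γ : ℝ → Fin d → ℝ)
    (hγU : ∀ t ∈ Set.Icc (0 : ℝ) T, γ t ∈ U)
    (hγ : ∀ t ∈ Set.Icc (0 : ℝ) T, HasDerivAt γ (u (γ t)) t)
    (h0 : r (γ 0) = 0) :
    ∀ t ∈ Set.Icc (0 : ℝ) T, r (γ t) = 0 := by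
  set f : ℝ → ℝ := fun t => r (γ t) with hfdef
  set c : ℝ → ℝ := fun t =>
    ∑ α : Fin d, fderiv ℝ (fun y => u y α) (γ t) (Pi.single α 1) with hcdef
  -- derivative of f
  have key : ∀ t ∈ Set.Icc (0 : ℝ) T, HasDerivAt f (-(c t) * f t) t := by
    intro t ht
    have hxU := hγU t ht
    have hd1 : HasDerivAt f (fderiv ℝ r (γ t) (u (γ t))) t :=
      (hr _ hxU).hasFDerivAt.comp_hasDerivAt t (hγ t ht)
    have hrepr : u (γ t) = ∑ α : Fin d, u (γ t) α • (Pi.single α 1 : Fin d → ℝ) := by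
      funext j
      simp [Finset.sum_apply, Pi.single_apply]
    have heq : fderiv ℝ r (γ t) (u (γ t)) = -(c t) * f t := by
      have h := hcont (γ t) hxU
      rw [Finset.sum_add_distrib, ← Finset.mul_sum] at h
      have hsum : (∑ α : Fin d, u (γ t) α * fderiv ℝ r (γ t) (Pi.single α 1))
          = -(c t) * f t := by
        simp only [hcdef, hfdef]
        linarith
      calc fderiv ℝ r (γ t) (u (γ t))
          = fderiv ℝ r (γ t) (∑ α : Fin d, u (γ t) α • (Pi.single α 1 : Fin d → ℝ)) := by
            rw [← hrepr]
        _ = ∑ α : Fin d, u (γ t) α * fderiv ℝ r (γ t) (Pi.single α 1) := by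
            rw [map_sum]; simp [smul_eq_mul]
        _ = -(c t) * f t := hsum
    exact heq ▸ hd1
  -- continuity of c on [0, T]
  have hγcont : ContinuousOn γ (Set.Icc 0 T) := fun t ht =>
    (hγ t ht).continuousAt.continuousWithinAt
  have hfd : ContinuousOn (fun x => fderiv ℝ u x) U :=
    hu.continuousOn_fderiv_of_isOpen hU le_rfl
  have hcomp : ∀ t ∈ Set.Icc (0:ℝ) T, ∀ α : Fin d,
      fderiv ℝ (fun y => u y α) (γ t) (Pi.single α 1)
        = fderiv ℝ u (γ t) (Pi.single α 1) α := by
    intro t ht α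
    have hdu : DifferentiableAt ℝ u (γ t) :=
      (hu.contDiffAt (hU.mem_nhds (hγU t ht))).differentiableAt one_ne_zero
    have : fderiv ℝ (fun y => u y α) (γ t)
        = (ContinuousLinearMap.proj α :
            (Fin d → ℝ) →L[ℝ] ℝ).comp (fderiv ℝ u (γ t)) := by
      have := ((ContinuousLinearMap.proj α :
          (Fin d → ℝ) →L[ℝ] ℝ).hasFDerivAt.comp (γ t) hdu.hasFDerivAt)
      exact this.fderiv
    rw [this]; rfl
  have hccont : ContinuousOn c (Set.Icc 0 T) := by
    have : ContinuousOn (fun t =>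
        ∑ α : Fin d, fderiv ℝ u (γ t) (Pi.single α 1) α) (Set.Icc 0 T) := by
      apply continuousOn_finset_sum
      intro α _
      have h1 : ContinuousOn (fun t => fderiv ℝ u (γ t)) (Set.Icc 0 T) :=
        hfd.comp hγcont hγU
      have h2 : ContinuousOn (fun t => fderiv ℝ u (γ t) (Pi.single α 1))
          (Set.Icc 0 T) := h1.clm_apply continuousOn_const
      exact (continuous_apply α).comp_continuousOn h2
    refine this.congr ?_
    intro t ht
    simp only [hcdef]
    exact Finset.sum_congr rfl (fun α _ => hcomp t ht α)
  -- bound on |c|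
  obtain ⟨K, hK⟩ := (isCompact_Icc (a := (0:ℝ)) (b := T)).exists_bound_of_continuousOn hccont
  -- Gronwall
  have hfin : ∀ t ∈ Set.Icc (0:ℝ) T, ‖f t‖ ≤ gronwallBound 0 K 0 (t - 0) := by
    apply norm_le_gronwallBound_of_norm_deriv_right_le
      (f' := fun t => -(c t) * f t)
    · intro t ht
      exact (key t ht).continuousAt.continuousWithinAt
    · intro t ht
      exact (key t (Set.Ico_subset_Icc_self ht)).hasDerivWithinAt
    · simp [hfdef, h0]
    · intro t ht
      have hct := hK t (Set.Ico_subset_Icc_self ht)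
      have : ‖-(c t) * f t‖ = ‖c t‖ * ‖f t‖ := by
        rw [norm_mul, norm_neg]
      rw [this]
      have : ‖c t‖ * ‖f t‖ ≤ K * ‖f t‖ :=
        mul_le_mul_of_nonneg_right hct (norm_nonneg _)
      linarith
  intro t ht
  have := hfin t ht
  rw [gronwallBound_ε0] at this
  simp at this
  have : ‖f t‖ ≤ 0 := by simpa using this
  have : f t = 0 := norm_le_zero_iff.mp this
  exact this
end

section
/- Let n ≥ 1, d = 1+n, η = diag(−1,1,…,1) on ℝ^d (indices raised and lowered with η), U ⊆ ℝ^d open. Let F : U → M_d(ℝ) be C¹ with antisymmetric values F_{αβ} = −F_{βα} satisfying the Bianchi identity ∂_α F_{βγ} + ∂_β F_{γα} + ∂_γ F_{αβ} = 0, let u : U → ℝ^d and r, q : U → ℝ be differentiable with η(u,u) = −1 on U, and suppose the Maxwell equation Σ_α ∂_α F^{αβ} = q u^β holds for every β, where F^{αβ} = Σ_{λ,μ} η^{αλ} η^{βμ} F_{λμ}. Define τ^{αβ} = Σ_λ F^{α}{}_λ F^{βλ} − (1/4) η^{αβ} Σ_{λ,μ} F^{λμ} F_{λμ} and T^{αβ}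 = r u^α u^β + τ^{αβ}. Then Σ_α ∂_α T^{αβ} = 0 on U for every β if and only if both the continuity equation Σ_α ∂_α (r u^α) = 0 and, for every β, the Lorentz force equation r Σ_α u^α ∂_α u^β + q Σ_λ u_λ F^{βλ} = 0 hold on U (where u_λ = Σ_μ η_{λμ} u^μ). -/
/-- The Minkowski metric matrix `η = diag(-1,1,…,1)` on `ℝ^{1+n}`;
it is its own inverse. -/
noncomputable def etaM (n : ℕ) : Matrix (Fin (n + 1)) (Fin (n + 1)) ℝ :=
  Matrix.diagonal (fun α => if α = 0 then -1 else 1)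

/-- Raising both indices: `F^{αβ} = ∑_{λ,μ} η^{αλ} η^{βμ} F_{λμ}`. -/
noncomputable def Fup (n : ℕ)
    (F : (Fin (n + 1) → ℝ) → Fin (n + 1) → Fin (n + 1) → ℝ)
    (y : Fin (n + 1) → ℝ) (α β : Fin (n + 1)) : ℝ :=
  ∑ lam : Fin (n + 1), ∑ μ : Fin (n + 1), etaM n α lam * etaM n β μ * F y lam μ

/-- Raising the first index: `F^{α}{}_{λ} = ∑_μ η^{αμ} F_{μλ}`. -/
noncomputable def Fmix (n : ℕ)
    (F : (Fin (n + 1) → ℝ) → Fin (n + 1) → Fin (n + 1) → ℝ)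
    (y : Fin (n + 1) → ℝ) (α lam : Fin (n + 1)) : ℝ :=
  ∑ μ : Fin (n + 1), etaM n α μ * F y μ lam

/-- The Maxwell stress tensor
`τ^{αβ} = ∑_λ F^{α}{}_λ F^{βλ} - (1/4) η^{αβ} ∑_{λ,μ} F^{λμ} F_{λμ}`. -/
noncomputable def tauUp (n : ℕ)
    (F : (Fin (n + 1) → ℝ) → Fin (n + 1) → Fin (n + 1) → ℝ)
    (y : Fin (n + 1) → ℝ) (α β : Fin (n + 1)) : ℝ :=
  ∑ lam : Fin (n + 1), Fmix n F y α lam * Fup n F y β lam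
    - (1 / 4) * etaM n α β
        * ∑ lam : Fin (n + 1), ∑ μ : Fin (n + 1), Fup n F y lam μ * F y lam μ

/-- The Minkowski bilinear form `η(x,y) = -x₀y₀ + ∑ᵢ xᵢyᵢ` determined by
the matrix `η = diag(-1,1,…,1)`. -/
noncomputable def minkowski (n : ℕ) (x y : Fin (n + 1) → ℝ) : ℝ :=
  ∑ α : Fin (n + 1), ∑ β : Fin (n + 1), etaM n α β * x α * y β

/- ## auxiliary lemmas -/

lemma etaM_apply {n : ℕ} (α β : Fin (n+1)) :
    etaM n α β = if α = β then (if α = 0 then (-1:ℝ) else 1) else 0 := by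
  simp [etaM, Matrix.diagonal_apply]

lemma etaM_sq {n : ℕ} (α : Fin (n+1)) : etaM n α α * etaM n α α = 1 := by
  simp [etaM_apply]; split <;> norm_num

lemma etaM_off {n : ℕ} {α β : Fin (n+1)} (h : α ≠ β) : etaM n α β = 0 := by
  rw [etaM_apply]; simp [h]

lemma Fup_eq {n : ℕ} (F : (Fin (n + 1) → ℝ) → Fin (n + 1) → Fin (n + 1) → ℝ)
    (y : Fin (n + 1) → ℝ) (α β : Fin (n + 1)) :
    Fup n F y α β = etaM n α α * etaM n β β * F y α β := by
  simp [Fup, etaM_apply, ite_mul, mul_ite, Finset.sum_ite_eq, Finset.sum_ite_eq']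

lemma Fmix_eq {n : ℕ} (F : (Fin (n + 1) → ℝ) → Fin (n + 1) → Fin (n + 1) → ℝ)
    (y : Fin (n + 1) → ℝ) (α lam : Fin (n + 1)) :
    Fmix n F y α lam = etaM n α α * F y α lam := by
  simp [Fmix, etaM_apply, ite_mul, Finset.sum_ite_eq]

lemma eta_vec {n : ℕ} (lam : Fin (n+1)) (v : Fin (n+1) → ℝ) :
    ∑ μ : Fin (n+1), etaM n lam μ * v μ = etaM n lam lam * v lam := by
  simp [etaM_apply, ite_mul, Finset.sum_ite_eq]

lemma minkowski_eq {n : ℕ} (x y : Fin (n+1) → ℝ) :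
    minkowski n x y = ∑ α : Fin (n+1), etaM n α α * x α * y α := by
  simp [minkowski, etaM_apply, ite_mul, Finset.sum_ite_eq]

lemma tau_eq {n : ℕ} (F : (Fin (n + 1) → ℝ) → Fin (n + 1) → Fin (n + 1) → ℝ)
    (y : Fin (n + 1) → ℝ) (α β : Fin (n + 1)) :
    tauUp n F y α β
      = etaM n α α * etaM n β β
          * (∑ lam : Fin (n+1), etaM n lam lam * (F y α lam * F y β lam))
        - (1/4) * etaM n α β
          * (∑ lam : Fin (n+1), ∑ μ : Fin (n+1),
              etaM n lam lam * etaM n μ μ * (F y lam μ * F y lam μ)) := by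
  have h1 : ∑ lam : Fin (n+1), Fmix n F y α lam * Fup n F y β lam
      = etaM n α α * etaM n β β
          * ∑ lam : Fin (n+1), etaM n lam lam * (F y α lam * F y β lam) := by
    rw [Finset.mul_sum]
    exact Finset.sum_congr rfl fun lam _ => by rw [Fmix_eq, Fup_eq]; ring
  have h2 : (∑ lam : Fin (n+1), ∑ μ : Fin (n+1), Fup n F y lam μ * F y lam μ)
      = ∑ lam : Fin (n+1), ∑ μ : Fin (n+1),
          etaM n lam lam * etaM n μ μ * (F y lam μ * F y lam μ) :=
    Finset.sum_congr rfl fun lam _ => Finset.sum_congr rfl fun μ _ => by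
      rw [Fup_eq]; ring
  unfold tauUp
  rw [h1, h2]

/- ## fderiv helpers -/

section fd
variable {E : Type*} [NormedAddCommGroup E] [NormedSpace ℝ E] {x v : E}

lemma fd_sum {ι : Type*} (s : Finset ι) (f : ι → E → ℝ)
    (h : ∀ i ∈ s, DifferentiableAt ℝ (f i) x) (v : E) :
    fderiv ℝ (fun y => ∑ i ∈ s, f i y) x v = ∑ i ∈ s, fderiv ℝ (f i) x v := by
  rw [fderiv_fun_sum h]; simp

lemma fd_mul {f g : E → ℝ} (hf : DifferentiableAt ℝ f x)
    (hg : DifferentiableAt ℝ g x) (v : E) :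
    fderiv ℝ (fun y => f y * g y) x v
      = fderiv ℝ f x v * g x + f x * fderiv ℝ g x v := by
  rw [fderiv_fun_mul hf hg]; simp; ring

lemma fd_cmul {f : E → ℝ} (c : ℝ) (hf : DifferentiableAt ℝ f x) (v : E) :
    fderiv ℝ (fun y => c * f y) x v = c * fderiv ℝ f x v := by
  rw [fderiv_const_mul hf]; simp

lemma fd_sub {f g : E → ℝ} (hf : DifferentiableAt ℝ f x)
    (hg : DifferentiableAt ℝ g x) (v : E) :
    fderiv ℝ (fun y => f y - g y) x v = fderiv ℝ f x v - fderiv ℝ g x v := by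
  rw [fderiv_fun_sub hf hg]; simp

lemma fd_add {f g : E → ℝ} (hf : DifferentiableAt ℝ f x)
    (hg : DifferentiableAt ℝ g x) (v : E) :
    fderiv ℝ (fun y => f y + g y) x v = fderiv ℝ f x v + fderiv ℝ g x v := by
  rw [fderiv_fun_add hf hg]; simp
end fd

section main
variable {n : ℕ} {F : (Fin (n + 1) → ℝ) → Fin (n + 1) → Fin (n + 1) → ℝ}
  {x : Fin (n+1) → ℝ}

lemma hP_diff (hFx : ∀ a b : Fin (n+1), DifferentiableAt ℝ (fun y => F y a b) x)
    (a b : Fin (n+1)) :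
    DifferentiableAt ℝ
      (fun y => ∑ lam : Fin (n+1), etaM n lam lam * (F y a lam * F y b lam)) x :=
  DifferentiableAt.fun_sum fun lam _ => ((hFx a lam).mul (hFx b lam)).const_mul _

lemma hS_diff (hFx : ∀ a b : Fin (n+1), DifferentiableAt ℝ (fun y => F y a b) x) :
    DifferentiableAt ℝ
      (fun y => ∑ lam : Fin (n+1), ∑ μ : Fin (n+1),
        etaM n lam lam * etaM n μ μ * (F y lam μ * F y lam μ)) x :=
  DifferentiableAt.fun_sum fun lam _ => DifferentiableAt.fun_sum fun μ _ =>
    ((hFx lam μ).mul (hFx lam μ)).const_mul _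

lemma tau_diff (hFx : ∀ a b : Fin (n+1), DifferentiableAt ℝ (fun y => F y a b) x)
    (α β : Fin (n+1)) :
    DifferentiableAt ℝ (fun y => tauUp n F y α β) x := by
  have : (fun y => tauUp n F y α β)
      = fun y => etaM n α α * etaM n β β
          * (∑ lam : Fin (n+1), etaM n lam lam * (F y α lam * F y β lam))
        - (1/4) * etaM n α β
          * (∑ lam : Fin (n+1), ∑ μ : Fin (n+1),
              etaM n lam lam * etaM n μ μ * (F y lam μ * F y lam μ)) :=
    funext fun y => tau_eq F y α β
  rw [this]
  exact ((hP_diff hFx α β).const_mul _).sub ((hS_diff hFx).const_mul _)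

lemma fderiv_tau_apply
    (hFx : ∀ a b : Fin (n+1), DifferentiableAt ℝ (fun y => F y a b) x)
    (α β γ : Fin (n+1)) :
    fderiv ℝ (fun y => tauUp n F y α β) x (Pi.single γ 1)
      = etaM n α α * etaM n β β *
          (∑ lam : Fin (n+1), etaM n lam lam *
            (fderiv ℝ (fun y => F y α lam) x (Pi.single γ 1) * F x β lam
              + F x α lam * fderiv ℝ (fun y => F y β lam) x (Pi.single γ 1)))
        - (1/4) * etaM n α β *
          (∑ lam : Fin (n+1), ∑ μ : Fin (n+1), etaM n lam lam * etaM n μ μ *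
            (2 * (F x lam μ * fderiv ℝ (fun y => F y lam μ) x (Pi.single γ 1)))) := by
  have hfun : (fun y => tauUp n F y α β)
      = fun y => etaM n α α * etaM n β β
          * (∑ lam : Fin (n+1), etaM n lam lam * (F y α lam * F y β lam))
        - (1/4) * etaM n α β
          * (∑ lam : Fin (n+1), ∑ μ : Fin (n+1),
              etaM n lam lam * etaM n μ μ * (F y lam μ * F y lam μ)) :=
    funext fun y => tau_eq F y α β
  rw [hfun, fd_sub ((hP_diff hFx α β).const_mul _) ((hS_diff hFx).const_mul _),
    fd_cmul _ (hP_diff hFx α β), fd_cmul _ (hS_diff hFx),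
    fd_sum _ _ (fun lam _ => ((hFx α lam).fun_mul (hFx β lam)).const_mul _),
    fd_sum _ _ (fun lam _ => (DifferentiableAt.fun_sum fun μ _ =>
      ((hFx lam μ).fun_mul (hFx lam μ)).const_mul _ : DifferentiableAt ℝ _ x))]
  congr 1
  · congr 1
    exact Finset.sum_congr rfl fun lam _ => by
      rw [fd_cmul _ ((hFx α lam).fun_mul (hFx β lam)), fd_mul (hFx α lam) (hFx β lam)]
  · congr 1
    refine Finset.sum_congr rfl fun lam _ => ?_
    rw [fd_sum _ _ (fun μ _ => ((hFx lam μ).fun_mul (hFx lam μ)).const_mul _)]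
    refine Finset.sum_congr rfl fun μ _ => ?_
    rw [fd_cmul _ ((hFx lam μ).fun_mul (hFx lam μ)), fd_mul (hFx lam μ) (hFx lam μ)]
    ring
end main
section div
variable {n : ℕ} {U : Set (Fin (n + 1) → ℝ)}
  {F : (Fin (n + 1) → ℝ) → Fin (n + 1) → Fin (n + 1) → ℝ}
  {u : (Fin (n + 1) → ℝ) → (Fin (n + 1) → ℝ)}
  {q : (Fin (n + 1) → ℝ) → ℝ}

lemma tau_div (hU : IsOpen U)
    (hanti : ∀ x ∈ U, ∀ α β : Fin (n + 1), F x α β = -F x β α)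
    (hbianchi : ∀ x ∈ U, ∀ α β γ : Fin (n + 1),
      fderiv ℝ (fun y => F y β γ) x (Pi.single α 1)
        + fderiv ℝ (fun y => F y γ α) x (Pi.single β 1)
        + fderiv ℝ (fun y => F y α β) x (Pi.single γ 1) = 0)
    (hmaxwell : ∀ x ∈ U, ∀ β : Fin (n + 1),
      ∑ α : Fin (n + 1), fderiv ℝ (fun z => Fup n F z α β) x (Pi.single α 1)
        = q x * u x β)
    {x : Fin (n+1) → ℝ} (hx : x ∈ U)
    (hFx : ∀ a b : Fin (n+1), DifferentiableAt ℝ (fun y => F y a b) x)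
    (β : Fin (n+1)) :
    ∑ α : Fin (n+1), fderiv ℝ (fun y => tauUp n F y α β) x (Pi.single α 1)
      = q x * ∑ lam : Fin (n+1),
          (∑ μ : Fin (n+1), etaM n lam μ * u x μ) * Fup n F x β lam := by
  -- notation for derivatives
  set DF : Fin (n+1) → Fin (n+1) → Fin (n+1) → ℝ :=
    fun a b γ => fderiv ℝ (fun y => F y a b) x (Pi.single γ 1) with hDFdef
  -- simplified Maxwell equation
  have hM : ∀ lam : Fin (n+1),
      ∑ α : Fin (n+1), etaM n α α * etaM n lam lam * DF α lam α
        = q x * u x lam := by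
    intro lam
    have hmx := hmaxwell x hx lam
    rw [← hmx]
    refine Finset.sum_congr rfl fun α _ => ?_
    have hfun : (fun z => Fup n F z α lam)
        = fun z => etaM n α α * etaM n lam lam * F z α lam :=
      funext fun z => Fup_eq F z α lam
    rw [hfun, fd_cmul _ (hFx α lam)]
  -- antisymmetry of the derivative
  have hDanti : ∀ a b γ : Fin (n+1), DF a b γ = -DF b a γ := by
    intro a b γ
    have hfe : (fun y => F y a b) =ᶠ[nhds x] (fun y => -F y b a) :=
      Filter.eventuallyEq_of_mem (hU.mem_nhds hx) (fun y hy => hanti y hy a b)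
    simp only [hDFdef]
    rw [hfe.fderiv_eq, fderiv_fun_neg]
    simp
  -- expand each divergence term
  have hexp : ∑ α : Fin (n+1), fderiv ℝ (fun y => tauUp n F y α β) x (Pi.single α 1)
      = ∑ α : Fin (n+1),
          (etaM n α α * etaM n β β *
            (∑ lam : Fin (n+1), etaM n lam lam *
              (DF α lam α * F x β lam + F x α lam * DF β lam α))
          - (1/4) * etaM n α β *
            (∑ lam : Fin (n+1), ∑ μ : Fin (n+1), etaM n lam lam * etaM n μ μ *
              (2 * (F x lam μ * DF lam μ α)))) :=
    Finset.sum_congr rfl fun α _ => fderiv_tau_apply hFx α β α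
  rw [hexp, Finset.sum_sub_distrib]
  -- collapse the trace part
  have hcol : ∑ α : Fin (n+1), (1/4) * etaM n α β *
        (∑ lam : Fin (n+1), ∑ μ : Fin (n+1), etaM n lam lam * etaM n μ μ *
          (2 * (F x lam μ * DF lam μ α)))
      = (1/4) * etaM n β β *
        (∑ lam : Fin (n+1), ∑ μ : Fin (n+1), etaM n lam lam * etaM n μ μ *
          (2 * (F x lam μ * DF lam μ β))) := by
    rw [Finset.sum_eq_single β]
    · intro b _ hb; rw [etaM_off hb]; ring
    · intro hb; exact absurd (Finset.mem_univ β) hb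
  rw [hcol]
  -- split the first part into the Maxwell piece and the B piece
  have hsplit : ∑ α : Fin (n+1), etaM n α α * etaM n β β *
        (∑ lam : Fin (n+1), etaM n lam lam *
          (DF α lam α * F x β lam + F x α lam * DF β lam α))
      = etaM n β β * (∑ lam : Fin (n+1),
          (∑ α : Fin (n+1), etaM n α α * etaM n lam lam * DF α lam α) * F x β lam)
        + etaM n β β * (∑ α : Fin (n+1), ∑ lam : Fin (n+1),
            etaM n α α * etaM n lam lam * (F x α lam * DF β lam α)) := by
    have e1 : ∀ α : Fin (n+1), etaM n α α * etaM n β β *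
          (∑ lam : Fin (n+1), etaM n lam lam *
            (DF α lam α * F x β lam + F x α lam * DF β lam α))
        = (∑ lam : Fin (n+1),
            etaM n β β * (etaM n α α * etaM n lam lam * DF α lam α * F x β lam))
          + (∑ lam : Fin (n+1),
              etaM n β β * (etaM n α α * etaM n lam lam * (F x α lam * DF β lam α))) := by
      intro α
      rw [Finset.mul_sum, ← Finset.sum_add_distrib]
      exact Finset.sum_congr rfl fun lam _ => by ring
    rw [Finset.sum_congr rfl fun α _ => e1 α, Finset.sum_add_distrib]
    congr 1
    · rw [Finset.sum_comm, Finset.mul_sum]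
      refine Finset.sum_congr rfl fun lam _ => ?_
      rw [Finset.sum_mul, Finset.mul_sum]
    · rw [Finset.mul_sum]
      refine Finset.sum_congr rfl fun α _ => ?_
      rw [Finset.mul_sum]
  rw [hsplit]
  -- Bianchi: B = C - B
  set B : ℝ := ∑ α : Fin (n+1), ∑ lam : Fin (n+1),
      etaM n α α * etaM n lam lam * (F x α lam * DF β lam α) with hBdef
  set C : ℝ := ∑ lam : Fin (n+1), ∑ μ : Fin (n+1),
      etaM n lam lam * etaM n μ μ * (F x lam μ * DF lam μ β) with hCdef
  have hrwD : ∀ a lam : Fin (n+1), DF β lam a = DF a lam β - DF a β lam := by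
    intro a lam
    have h3 := hbianchi x hx a β lam
    have h4 := hDanti lam a β
    simp only [hDFdef] at h3 h4 ⊢
    linarith
  have hBC : B = C - B := by
    have step1 : B = (∑ a : Fin (n+1), ∑ lam : Fin (n+1),
          etaM n a a * etaM n lam lam * (F x a lam * DF a lam β))
        - (∑ a : Fin (n+1), ∑ lam : Fin (n+1),
            etaM n a a * etaM n lam lam * (F x a lam * DF a β lam)) := by
      rw [hBdef, ← Finset.sum_sub_distrib]
      refine Finset.sum_congr rfl fun a _ => ?_
      rw [← Finset.sum_sub_distrib]
      refine Finset.sum_congr rfl fun lam _ => ?_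
      rw [hrwD a lam]; ring
    have step2 : (∑ a : Fin (n+1), ∑ lam : Fin (n+1),
          etaM n a a * etaM n lam lam * (F x a lam * DF a β lam)) = B := by
      rw [Finset.sum_comm, hBdef]
      refine Finset.sum_congr rfl fun a _ => Finset.sum_congr rfl fun b _ => ?_
      have h5 : F x b a = -F x a b := hanti x hx b a
      have h6 : DF b β a = -DF β b a := hDanti b β a
      rw [h5, h6]; ring
    rw [hCdef]
    linarith [step1, step2]
  have hB2 : B = (1/2) * C := by linarith
  -- final assembly
  have hA : (∑ lam : Fin (n+1),
        (∑ α : Fin (n+1), etaM n α α * etaM n lam lam * DF α lam α) * F x β lam)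
      = ∑ lam : Fin (n+1), q x * u x lam * F x β lam :=
    Finset.sum_congr rfl fun lam _ => by rw [hM lam]
  have hC2 : (∑ lam : Fin (n+1), ∑ μ : Fin (n+1), etaM n lam lam * etaM n μ μ *
        (2 * (F x lam μ * DF lam μ β))) = 2 * C := by
    rw [hCdef, Finset.mul_sum]
    refine Finset.sum_congr rfl fun lam _ => ?_
    rw [Finset.mul_sum]
    exact Finset.sum_congr rfl fun μ _ => by ring
  have hRHS : q x * ∑ lam : Fin (n+1),
        (∑ μ : Fin (n+1), etaM n lam μ * u x μ) * Fup n F x β lam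
      = etaM n β β * ∑ lam : Fin (n+1), q x * u x lam * F x β lam := by
    rw [Finset.mul_sum, Finset.mul_sum]
    refine Finset.sum_congr rfl fun lam _ => ?_
    rw [eta_vec, Fup_eq]
    linear_combination (q x * u x lam * etaM n β β * F x β lam) * etaM_sq lam
  rw [hA, hC2, hRHS]
  linear_combination etaM n β β * hB2
end div
section rest
variable {n : ℕ} {U : Set (Fin (n + 1) → ℝ)}
  {F : (Fin (n + 1) → ℝ) → Fin (n + 1) → Fin (n + 1) → ℝ}
  {u : (Fin (n + 1) → ℝ) → (Fin (n + 1) → ℝ)}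
  {r q : (Fin (n + 1) → ℝ) → ℝ}

lemma key_div (hU : IsOpen U) (hF : ContDiffOn ℝ 1 F U)
    (hanti : ∀ x ∈ U, ∀ α β : Fin (n + 1), F x α β = -F x β α)
    (hbianchi : ∀ x ∈ U, ∀ α β γ : Fin (n + 1),
      fderiv ℝ (fun y => F y β γ) x (Pi.single α 1)
        + fderiv ℝ (fun y => F y γ α) x (Pi.single β 1)
        + fderiv ℝ (fun y => F y α β) x (Pi.single γ 1) = 0)
    (hu : ∀ x ∈ U, DifferentiableAt ℝ u x)
    (hr : ∀ x ∈ U, DifferentiableAt ℝ r x)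
    (hmaxwell : ∀ x ∈ U, ∀ β : Fin (n + 1),
      ∑ α : Fin (n + 1), fderiv ℝ (fun z => Fup n F z α β) x (Pi.single α 1)
        = q x * u x β)
    {x : Fin (n+1) → ℝ} (hx : x ∈ U) (β : Fin (n+1)) :
    ∑ α : Fin (n+1),
        fderiv ℝ (fun y => r y * u y α * u y β + tauUp n F y α β) x (Pi.single α 1)
      = (∑ α : Fin (n+1), fderiv ℝ (fun y => r y * u y α) x (Pi.single α 1)) * u x β
        + (r x * ∑ α : Fin (n+1),
              u x α * fderiv ℝ (fun y => u y β) x (Pi.single α 1)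
            + q x * ∑ lam : Fin (n+1),
                (∑ μ : Fin (n+1), etaM n lam μ * u x μ) * Fup n F x β lam) := by
  have hFx : ∀ a b : Fin (n+1), DifferentiableAt ℝ (fun y => F y a b) x := by
    intro a b
    have h0 : DifferentiableAt ℝ F x :=
      ((hF.differentiableOn one_ne_zero).differentiableAt (hU.mem_nhds hx))
    exact (differentiableAt_pi.mp ((differentiableAt_pi.mp h0) a)) b
  have hux : ∀ a : Fin (n+1), DifferentiableAt ℝ (fun y => u y a) x :=
    fun a => (differentiableAt_pi.mp (hu x hx)) a
  have hrx := hr x hx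
  have h1 : ∀ α : Fin (n+1),
      fderiv ℝ (fun y => r y * u y α * u y β + tauUp n F y α β) x (Pi.single α 1)
        = fderiv ℝ (fun y => r y * u y α * u y β) x (Pi.single α 1)
          + fderiv ℝ (fun y => tauUp n F y α β) x (Pi.single α 1) :=
    fun α => fd_add ((hrx.mul (hux α)).mul (hux β)) (tau_diff hFx α β) _
  rw [Finset.sum_congr rfl fun α _ => h1 α, Finset.sum_add_distrib,
    tau_div hU hanti hbianchi hmaxwell hx hFx β]
  have h2 : ∀ α : Fin (n+1),
      fderiv ℝ (fun y => r y * u y α * u y β) x (Pi.single α 1)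
        = fderiv ℝ (fun y => r y * u y α) x (Pi.single α 1) * u x β
          + (r x * u x α) * fderiv ℝ (fun y => u y β) x (Pi.single α 1) :=
    fun α => fd_mul (hrx.mul (hux α)) (hux β) _
  rw [Finset.sum_congr rfl fun α _ => h2 α, Finset.sum_add_distrib,
    ← Finset.sum_mul]
  have h4 : ∑ α : Fin (n+1), r x * u x α * fderiv ℝ (fun y => u y β) x (Pi.single α 1)
      = r x * ∑ α : Fin (n+1), u x α * fderiv ℝ (fun y => u y β) x (Pi.single α 1) := by
    rw [Finset.mul_sum]
    exact Finset.sum_congr rfl fun α _ => by ring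
  rw [h4]; ring

lemma unit_deriv (hU : IsOpen U) (hu : ∀ x ∈ U, DifferentiableAt ℝ u x)
    (hunit : ∀ x ∈ U, minkowski n (u x) (u x) = -1)
    {x : Fin (n+1) → ℝ} (hx : x ∈ U) (γ : Fin (n+1)) :
    ∑ a : Fin (n+1),
      etaM n a a * (u x a * fderiv ℝ (fun y => u y a) x (Pi.single γ 1)) = 0 := by
  have hux : ∀ a : Fin (n+1), DifferentiableAt ℝ (fun y => u y a) x :=
    fun a => (differentiableAt_pi.mp (hu x hx)) a
  have hfe : (fun y => ∑ a : Fin (n+1), etaM n a a * u y a * u y a)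
      =ᶠ[nhds x] (fun _ => (-1:ℝ)) :=
    Filter.eventuallyEq_of_mem (hU.mem_nhds hx)
      (fun y hy => by rw [← minkowski_eq]; exact hunit y hy)
  have h0 : fderiv ℝ (fun y => ∑ a : Fin (n+1), etaM n a a * u y a * u y a) x = 0 := by
    rw [hfe.fderiv_eq]; simp
  have h1 : fderiv ℝ (fun y => ∑ a : Fin (n+1), etaM n a a * u y a * u y a) x
      (Pi.single γ 1) = 0 := by rw [h0]; simp
  rw [fd_sum _ (fun a => fun y => etaM n a a * u y a * u y a)
    (fun a _ => ((hux a).const_mul _).mul (hux a))] at h1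
  have h2 : ∀ a : Fin (n+1),
      fderiv ℝ (fun y => etaM n a a * u y a * u y a) x (Pi.single γ 1)
        = etaM n a a * fderiv ℝ (fun y => u y a) x (Pi.single γ 1) * u x a
          + etaM n a a * u x a * fderiv ℝ (fun y => u y a) x (Pi.single γ 1) := by
    intro a
    rw [fd_mul ((hux a).const_mul _) (hux a), fd_cmul _ (hux a)]
  rw [Finset.sum_congr rfl fun a _ => h2 a] at h1
  have h3 : ∑ a : Fin (n+1),
      etaM n a a * (u x a * fderiv ℝ (fun y => u y a) x (Pi.single γ 1))
      = (1/2) * ∑ a : Fin (n+1),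
          (etaM n a a * fderiv ℝ (fun y => u y a) x (Pi.single γ 1) * u x a
            + etaM n a a * u x a * fderiv ℝ (fun y => u y a) x (Pi.single γ 1)) := by
    rw [Finset.mul_sum]
    exact Finset.sum_congr rfl fun a _ => by ring
  rw [h3, h1]; ring

lemma Lorth (hU : IsOpen U)
    (hanti : ∀ x ∈ U, ∀ α β : Fin (n + 1), F x α β = -F x β α)
    (hu : ∀ x ∈ U, DifferentiableAt ℝ u x)
    (hunit : ∀ x ∈ U, minkowski n (u x) (u x) = -1)
    {x : Fin (n+1) → ℝ} (hx : x ∈ U) :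
    ∑ β : Fin (n+1), (∑ μ : Fin (n+1), etaM n β μ * u x μ)
      * (r x * ∑ α : Fin (n+1), u x α * fderiv ℝ (fun y => u y β) x (Pi.single α 1)
          + q x * ∑ lam : Fin (n+1),
              (∑ μ : Fin (n+1), etaM n lam μ * u x μ) * Fup n F x β lam) = 0 := by
  simp only [eta_vec]
  have hsplit : ∀ β : Fin (n+1), (etaM n β β * u x β)
      * (r x * ∑ α : Fin (n+1), u x α * fderiv ℝ (fun y => u y β) x (Pi.single α 1)
          + q x * ∑ lam : Fin (n+1), etaM n lam lam * u x lam * Fup n F x β lam)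
      = r x * ((etaM n β β * u x β)
            * ∑ α : Fin (n+1), u x α * fderiv ℝ (fun y => u y β) x (Pi.single α 1))
        + q x * ((etaM n β β * u x β)
            * ∑ lam : Fin (n+1), etaM n lam lam * u x lam * Fup n F x β lam) :=
    fun β => by ring
  rw [Finset.sum_congr rfl fun β _ => hsplit β, Finset.sum_add_distrib,
    ← Finset.mul_sum, ← Finset.mul_sum]
  have p1 : ∑ β : Fin (n+1), (etaM n β β * u x β)
      * ∑ α : Fin (n+1), u x α * fderiv ℝ (fun y => u y β) x (Pi.single α 1) = 0 := by
    have e1 : ∀ β : Fin (n+1), (etaM n β β * u x β)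
        * ∑ α : Fin (n+1), u x α * fderiv ℝ (fun y => u y β) x (Pi.single α 1)
        = ∑ α : Fin (n+1), u x α
            * (etaM n β β * (u x β * fderiv ℝ (fun y => u y β) x (Pi.single α 1))) := by
      intro β
      rw [Finset.mul_sum]
      exact Finset.sum_congr rfl fun α _ => by ring
    rw [Finset.sum_congr rfl fun β _ => e1 β, Finset.sum_comm]
    refine Finset.sum_eq_zero fun α _ => ?_
    rw [← Finset.mul_sum, unit_deriv hU hu hunit hx α, mul_zero]
  have p2 : ∑ β : Fin (n+1), (etaM n β β * u x β)
      * ∑ lam : Fin (n+1), etaM n lam lam * u x lam * Fup n F x β lam = 0 := by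
    have e2 : ∀ β : Fin (n+1), (etaM n β β * u x β)
        * ∑ lam : Fin (n+1), etaM n lam lam * u x lam * Fup n F x β lam
        = ∑ lam : Fin (n+1), u x β * u x lam * F x β lam := by
      intro β
      rw [Finset.mul_sum]
      refine Finset.sum_congr rfl fun lam _ => ?_
      rw [Fup_eq]
      linear_combination (u x β * u x lam * F x β lam * etaM n β β * etaM n β β)
          * etaM_sq lam
        + (u x β * u x lam * F x β lam) * etaM_sq β
    rw [Finset.sum_congr rfl fun β _ => e2 β]
    have hS1 : ∑ β : Fin (n+1), ∑ lam : Fin (n+1), u x β * u x lam * F x β lam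
        = ∑ β : Fin (n+1), ∑ lam : Fin (n+1), -(u x β * u x lam * F x lam β) :=
      Finset.sum_congr rfl fun β _ => Finset.sum_congr rfl fun lam _ => by
        rw [hanti x hx β lam]; ring
    have hS2 : ∑ β : Fin (n+1), ∑ lam : Fin (n+1), u x β * u x lam * F x lam β
        = ∑ β : Fin (n+1), ∑ lam : Fin (n+1), u x β * u x lam * F x β lam := by
      rw [Finset.sum_comm]
      exact Finset.sum_congr rfl fun a _ => Finset.sum_congr rfl fun b _ => by ring
    have hS3 : ∑ β : Fin (n+1), ∑ lam : Fin (n+1), -(u x β * u x lam * F x lam β)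
        = -∑ β : Fin (n+1), ∑ lam : Fin (n+1), u x β * u x lam * F x lam β := by
      simp
    rw [hS1, hS3, hS2]
    linarith [hS1, hS2, hS3]
  rw [p1, p2]; ring

lemma wu_eq {x : Fin (n+1) → ℝ} :
    ∑ β : Fin (n+1), (∑ μ : Fin (n+1), etaM n β μ * u x μ) * u x β
      = minkowski n (u x) (u x) := by
  rw [minkowski_eq]
  exact Finset.sum_congr rfl fun β _ => by rw [eta_vec]
end rest

/-- for charged dust in flat space, modulo the Maxwell equations
(`dF = 0` and `∑_α ∂_α F^{αβ} = q u^β`) and the normalization `η(u,u) = -1`,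
the conservation law `∑_α ∂_α T^{αβ} = 0` for the total stress-energy tensor
`T^{αβ} = r u^α u^β + τ^{αβ}` is equivalent to the continuity equation
`∑_α ∂_α (r u^α) = 0` together with the Lorentz force equation
`r ∑_α u^α ∂_α u^β + q ∑_λ u_λ F^{βλ} = 0`. -/
theorem charged_dust_conservation_iff_continuity_and_lorentz_force
    (n : ℕ) (hn : 1 ≤ n)
    (U : Set (Fin (n + 1) → ℝ)) (hU : IsOpen U)
    (F : (Fin (n + 1) → ℝ) → Fin (n + 1) → Fin (n + 1) → ℝ)
    (hF : ContDiffOn ℝ 1 F U)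
    (hanti : ∀ x ∈ U, ∀ α β : Fin (n + 1), F x α β = -F x β α)
    (hbianchi : ∀ x ∈ U, ∀ α β γ : Fin (n + 1),
      fderiv ℝ (fun y => F y β γ) x (Pi.single α 1)
        + fderiv ℝ (fun y => F y γ α) x (Pi.single β 1)
        + fderiv ℝ (fun y => F y α β) x (Pi.single γ 1) = 0)
    (u : (Fin (n + 1) → ℝ) → (Fin (n + 1) → ℝ))
    (r q : (Fin (n + 1) → ℝ) → ℝ)
    (hu : ∀ x ∈ U, DifferentiableAt ℝ u x)
    (hr : ∀ x ∈ U, DifferentiableAt ℝ r x)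
    (hq : ∀ x ∈ U, DifferentiableAt ℝ q x)
    (hunit : ∀ x ∈ U, minkowski n (u x) (u x) = -1)
    (hmaxwell : ∀ x ∈ U, ∀ β : Fin (n + 1),
      ∑ α : Fin (n + 1), fderiv ℝ (fun z => Fup n F z α β) x (Pi.single α 1)
        = q x * u x β) :
    (∀ x ∈ U, ∀ β : Fin (n + 1),
        ∑ α : Fin (n + 1),
          fderiv ℝ (fun y => r y * u y α * u y β + tauUp n F y α β)
            x (Pi.single α 1) = 0)
      ↔ ((∀ x ∈ U,
            ∑ α : Fin (n + 1),
              fderiv ℝ (fun y => r y * u y α) x (Pi.single α 1) = 0)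
          ∧ (∀ x ∈ U, ∀ β : Fin (n + 1),
              r x * ∑ α : Fin (n + 1),
                  u x α * fderiv ℝ (fun y => u y β) x (Pi.single α 1)
                + q x * ∑ lam : Fin (n + 1),
                    (∑ μ : Fin (n + 1), etaM n lam μ * u x μ) * Fup n F x β lam
                = 0)) := by
  constructor
  · intro h
    have hkey : ∀ x ∈ U, ∀ β : Fin (n+1),
        (∑ α : Fin (n+1), fderiv ℝ (fun y => r y * u y α) x (Pi.single α 1)) * u x β
          + (r x * ∑ α : Fin (n+1),
                u x α * fderiv ℝ (fun y => u y β) x (Pi.single α 1)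
              + q x * ∑ lam : Fin (n+1),
                  (∑ μ : Fin (n+1), etaM n lam μ * u x μ) * Fup n F x β lam) = 0 := by
      intro x hx β
      rw [← key_div hU hF hanti hbianchi hu hr hmaxwell hx β]
      exact h x hx β
    have hcont : ∀ x ∈ U,
        ∑ α : Fin (n+1), fderiv ℝ (fun y => r y * u y α) x (Pi.single α 1) = 0 := by
      intro x hx
      have hzero : ∑ β : Fin (n+1), (∑ μ : Fin (n+1), etaM n β μ * u x μ)
          * ((∑ α : Fin (n+1), fderiv ℝ (fun y => r y * u y α) x (Pi.single α 1)) * u x β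
            + (r x * ∑ α : Fin (n+1),
                  u x α * fderiv ℝ (fun y => u y β) x (Pi.single α 1)
                + q x * ∑ lam : Fin (n+1),
                    (∑ μ : Fin (n+1), etaM n lam μ * u x μ) * Fup n F x β lam)) = 0 :=
        Finset.sum_eq_zero fun β _ => by rw [hkey x hx β, mul_zero]
      have hexpand : ∑ β : Fin (n+1), (∑ μ : Fin (n+1), etaM n β μ * u x μ)
          * ((∑ α : Fin (n+1), fderiv ℝ (fun y => r y * u y α) x (Pi.single α 1)) * u x β
            + (r x * ∑ α : Fin (n+1),
                  u x α * fderiv ℝ (fun y => u y β) x (Pi.single α 1)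
                + q x * ∑ lam : Fin (n+1),
                    (∑ μ : Fin (n+1), etaM n lam μ * u x μ) * Fup n F x β lam))
          = (∑ α : Fin (n+1), fderiv ℝ (fun y => r y * u y α) x (Pi.single α 1))
              * (∑ β : Fin (n+1), (∑ μ : Fin (n+1), etaM n β μ * u x μ) * u x β)
            + ∑ β : Fin (n+1), (∑ μ : Fin (n+1), etaM n β μ * u x μ)
                * (r x * ∑ α : Fin (n+1),
                      u x α * fderiv ℝ (fun y => u y β) x (Pi.single α 1)
                    + q x * ∑ lam : Fin (n+1),
                        (∑ μ : Fin (n+1), etaM n lam μ * u x μ) * Fup n F x β lam) := by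
        rw [Finset.mul_sum, ← Finset.sum_add_distrib]
        exact Finset.sum_congr rfl fun β _ => by ring
      rw [hexpand, wu_eq, hunit x hx, Lorth hU hanti hu hunit hx] at hzero
      linarith
    refine ⟨hcont, ?_⟩
    intro x hx β
    have h5 := hkey x hx β
    rw [hcont x hx] at h5
    linarith
  · rintro ⟨h1, h2⟩ x hx β
    rw [key_div hU hF hanti hbianchi hu hr hmaxwell hx β, h1 x hx, h2 x hx β]
    ring
end
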